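/- arXiv:1208.2088 — 4 statements merged into one kernel-verified Lean document; each statement's English description precedes it below -/
import Mathlib

section
/- For any irrational x in [0,1], the logarithms of the convergent denominators satisfy (1/2)∑_{j=0}^{n-1} log(1 + ω_j) − log(√2) ≤ log q_n ≤ ∑_{j=0}^{n-1} log(1 + ω_j) for every n, where ω_j are the partial quotients. -/
open Real Set

/-- The Gauss map. -/
noncomputable def gaussMap (x : ℝ) : ℝ := if x = 0 then 0 else 1 / x - ⌊1 / x⌋

/-- The n-th partial quotient of x. -/
noncomputable def cfOmega (x : ℝ) (n : ℕ) : ℕ := (⌊1 / (gaussMap^[n] x)⌋).toNat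

/-- (q_{n-1}, q_n) for the convergent denominators of x, with q_{-1} = 0, q_0 = 1. -/
noncomputable def cfQPair (x : ℝ) : ℕ → ℕ × ℕ
  | 0 => (0, 1)
  | n + 1 => ((cfQPair x n).2, cfOmega x n * (cfQPair x n).2 + (cfQPair x n).1)

/-- The denominator q_n of the n-th convergent of x. -/
noncomputable def cfQ (x : ℝ) (n : ℕ) : ℕ := (cfQPair x n).2

/-- (p_{n-1}, p_n) for the convergent numerators of x, with p_{-1} = 1, p_0 = 0. -/
noncomputable def cfPPair (x : ℝ) : ℕ → ℕ × ℕ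
  | 0 => (1, 0)
  | n + 1 => ((cfPPair x n).2, cfOmega x n * (cfPPair x n).2 + (cfPPair x n).1)

/-- The numerator p_n of the n-th convergent of x. -/
noncomputable def cfP (x : ℝ) (n : ℕ) : ℕ := (cfPPair x n).2

/-!
Writing `q_{n+1} = ω_n q_n + q_{n-1}` with `q_{n-1} ≤ q_n` and `ω_n ≥ 1` gives
`q_{n+1} ≤ (1 + ω_n) q_n`, whence `q_n ≤ ∏_{j<n} (1 + ω_j)`. Conversely the product
`q_n (q_n + q_{n-1})` grows at least by the factor `1 + ω_n` at each step, so
`∏_{j<n} (1 + ω_j) ≤ q_n (q_n + q_{n-1}) ≤ 2 q_n²`. Taking logarithms gives both bounds.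
-/

lemma gaussMap_of_ne_zero {y : ℝ} (hy : y ≠ 0) : gaussMap y = Int.fract (1 / y) := by
  rw [gaussMap, if_neg hy, Int.fract]

lemma irrational_gaussMap {y : ℝ} (hy : Irrational y) : Irrational (gaussMap y) := by
  rw [gaussMap_of_ne_zero hy.ne_zero, Int.fract, one_div]
  exact hy.inv.sub_intCast _

lemma gaussMap_mem_Ioo_of_irrational {y : ℝ} (hy : Irrational y) : gaussMap y ∈ Ioo 0 1 := by
  have hfract : gaussMap y = Int.fract (1 / y) := gaussMap_of_ne_zero hy.ne_zero
  have hne : Int.fract (1 / y) ≠ 0 := hfract ▸ (irrational_gaussMap hy).ne_zero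
  rw [hfract]
  exact ⟨(Int.fract_nonneg _).lt_of_ne hne.symm, Int.fract_lt_one _⟩

lemma irrational_gaussMap_iterate {y : ℝ} (hy : Irrational y) (n : ℕ) :
    Irrational (gaussMap^[n] y) := by
  induction n with
  | zero => exact hy
  | succ n ih => rw [Function.iterate_succ_apply']; exact irrational_gaussMap ih

lemma gaussMap_iterate_mem_Ioo {x : ℝ} (hx : x ∈ Icc (0 : ℝ) 1) (hirr : Irrational x) (n : ℕ) :
    gaussMap^[n] x ∈ Ioo 0 1 := by
  cases n with
  | zero =>
    exact ⟨hx.1.lt_of_ne hirr.ne_zero.symm, hx.2.lt_of_ne (by exact_mod_cast hirr.ne_one)⟩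
  | succ n =>
    rw [Function.iterate_succ_apply']
    exact gaussMap_mem_Ioo_of_irrational (irrational_gaussMap_iterate hirr n)

lemma one_le_cfOmega {x : ℝ} (hx : x ∈ Icc (0 : ℝ) 1) (hirr : Irrational x) (n : ℕ) :
    1 ≤ cfOmega x n := by
  obtain ⟨hpos, hlt⟩ := gaussMap_iterate_mem_Ioo hx hirr n
  have hinv : (1 : ℝ) ≤ 1 / gaussMap^[n] x := by rw [le_div_iff₀ hpos]; linarith
  have hfloor : (1 : ℤ) ≤ ⌊1 / gaussMap^[n] x⌋ := Int.le_floor.mpr (by exact_mod_cast hinv)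
  simpa [cfOmega] using Int.toNat_le_toNat hfloor

section Denominators

variable {x : ℝ} (hω : ∀ j, 1 ≤ cfOmega x j)
include hω

lemma cfQPair_fst_le_snd (n : ℕ) : (cfQPair x n).1 ≤ (cfQPair x n).2 := by
  cases n with
  | zero => simp [cfQPair]
  | succ n =>
    show (cfQPair x n).2 ≤ cfOmega x n * (cfQPair x n).2 + (cfQPair x n).1
    nlinarith [hω n]

lemma one_le_cfQ (n : ℕ) : 1 ≤ cfQ x n := by
  induction n with
  | zero => simp [cfQ, cfQPair]
  | succ n ih =>
    show 1 ≤ cfOmega x n * cfQ x n + (cfQPair x n).1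
    nlinarith [hω n]

lemma cfQ_le_prod (n : ℕ) : cfQ x n ≤ ∏ j ∈ Finset.range n, (1 + cfOmega x j) := by
  induction n with
  | zero => simp [cfQ, cfQPair]
  | succ n ih =>
    have hfst := cfQPair_fst_le_snd hω n
    calc cfQ x (n + 1) = cfOmega x n * cfQ x n + (cfQPair x n).1 := rfl
      _ ≤ (∏ j ∈ Finset.range n, (1 + cfOmega x j)) * (1 + cfOmega x n) := by
        unfold cfQ at ih ⊢; nlinarith
      _ = ∏ j ∈ Finset.range (n + 1), (1 + cfOmega x j) := (Finset.prod_range_succ _ _).symm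

lemma prod_le_cfQ_mul (n : ℕ) :
    ∏ j ∈ Finset.range n, (1 + cfOmega x j) ≤ cfQ x n * (cfQ x n + (cfQPair x n).1) := by
  induction n with
  | zero => simp [cfQ, cfQPair]
  | succ n ih =>
    set w := cfOmega x n
    set a := (cfQPair x n).1
    set b := cfQ x n
    have hw : 1 ≤ w := hω n
    -- `(w b + a)(w b + a + b) - b (b + a)(1 + w) = (w² - 1) b² + w a b + a²`
    calc ∏ j ∈ Finset.range (n + 1), (1 + cfOmega x j)
        = (∏ j ∈ Finset.range n, (1 + cfOmega x j)) * (1 + w) := Finset.prod_range_succ _ _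
      _ ≤ b * (b + a) * (1 + w) := Nat.mul_le_mul_right _ ih
      _ ≤ (w * b + a) * (w * b + a + b) := by nlinarith [Nat.mul_le_mul_right (b * b) (Nat.mul_le_mul hw hw), Nat.zero_le (w * a * b)]

lemma prod_le_two_mul_cfQ_sq (n : ℕ) :
    ∏ j ∈ Finset.range n, (1 + cfOmega x j) ≤ 2 * cfQ x n ^ 2 := by
  have hfst := cfQPair_fst_le_snd hω n
  calc ∏ j ∈ Finset.range n, (1 + cfOmega x j) ≤ cfQ x n * (cfQ x n + (cfQPair x n).1) :=
        prod_le_cfQ_mul hω n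
    _ ≤ 2 * cfQ x n ^ 2 := by unfold cfQ; nlinarith

end Denominators

theorem stmt3 (x : ℝ) (hx : x ∈ Icc (0:ℝ) 1) (hirr : Irrational x) (n : ℕ) :
    (1 / 2) * (∑ j ∈ Finset.range n, Real.log (1 + (cfOmega x j : ℝ))) - Real.log (Real.sqrt 2)
        ≤ Real.log (cfQ x n : ℝ) ∧
    Real.log (cfQ x n : ℝ) ≤ ∑ j ∈ Finset.range n, Real.log (1 + (cfOmega x j : ℝ)) := by
  have hω : ∀ j, 1 ≤ cfOmega x j := one_le_cfOmega hx hirr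
  have hq : (0 : ℝ) < cfQ x n := by exact_mod_cast one_le_cfQ hω n
  have hupper : (cfQ x n : ℝ) ≤ ∏ j ∈ Finset.range n, (1 + (cfOmega x j : ℝ)) := by
    exact_mod_cast cfQ_le_prod hω n
  have hlower : ∏ j ∈ Finset.range n, (1 + (cfOmega x j : ℝ)) ≤ 2 * (cfQ x n : ℝ) ^ 2 := by
    exact_mod_cast prod_le_two_mul_cfQ_sq hω n
  rw [← Real.log_prod (fun j _ => by positivity), Real.log_sqrt zero_le_two]
  refine ⟨?_, Real.log_le_log hq hupper⟩
  have hlog := Real.log_le_log (by positivity) hlower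
  rw [Real.log_mul two_ne_zero (by positivity), Real.log_pow] at hlog
  push_cast at hlog
  linarith
end

section
/- Let I₀ ⊂ ℕ be the set of all numbers of the form 1 + ∑_{n∈ℕ} a_n ⌊2^{n/δ}⌋ with a_n ∈ {0,1} and finitely many a_n = 1, where 0 < δ < 1. Then there exist constants such that for all y ∈ I₀ and all real r ≥ 1, the count #(I₀ ∩ [y−r, y+r]) is comparable to r^δ (bounded above and below by constant multiples of r^δ). -/
open Real Set

/-- The set of all 1 + ∑_n a_n ⌊2^{n/δ}⌋ with a_n ∈ {0,1}, finitely many 1s. -/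
noncomputable def I0 (δ : ℝ) : Set ℕ :=
  {m : ℕ | ∃ s : Finset ℕ, m = 1 + ∑ n ∈ s, (⌊(2 : ℝ) ^ ((n : ℝ) / δ)⌋).toNat}

/-!
Write `x = 2 ^ (1 / δ)`, so that `x ^ δ = 2`, and `b n = ⌊x ^ n⌋`. Since `x > 2` the weights are
superincreasing with room to spare: `b n - ∑_{k<n} b k > (x - 2) / (x - 1) * (x ^ n - 1)`.
Hence a subset sum determines its index set, and if two subset sums are at distance at most `r`,
the index sets agree from the first `M` with `x ^ M ≳ r` on. Conversely, changing an index set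
arbitrarily below the last `N` with `x ^ N ≤ r` moves its sum by at most `∑_{k<N} b k ≤ r`.
So the points of `I₀` within `r` of `y` are counted by between `2 ^ N` and `2 ^ M` index sets,
and both are comparable to `r ^ δ` because `(x ^ n) ^ δ = 2 ^ n`.
-/

open Finset

theorem Finset.ncard_setOf_sdiff_range_eq (s : Finset ℕ) (N : ℕ) :
    {t : Finset ℕ | t \ range N = s \ range N}.ncard = 2 ^ N := by
  have hinter : ∀ u ⊆ range N, (s \ range N ∪ u) ∩ range N = u := by
    intro u hu
    rw [union_inter_distrib_right, sdiff_inter_self, empty_union, inter_eq_left.2 hu]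
  have himage : {t : Finset ℕ | t \ range N = s \ range N} =
      (s \ range N ∪ ·) '' ↑(range N).powerset := by
    ext t
    simp only [Set.mem_ofPred_eq, Set.mem_image, mem_coe, mem_powerset]
    constructor
    · intro h
      exact ⟨t ∩ range N, inter_subset_right, by rw [← h, sdiff_union_inter]⟩
    · rintro ⟨u, hu, rfl⟩
      rw [union_sdiff_distrib, sdiff_idem, sdiff_eq_empty_iff_subset.2 hu, union_empty]
  have hinj : Set.InjOn (s \ range N ∪ ·) ↑(range N).powerset := by
    intro u hu v hv huv
    rw [← hinter u (mem_powerset.1 hu), ← hinter v (mem_powerset.1 hv)]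
    exact congrArg (· ∩ range N) huv
  rw [himage, hinj.ncard_image, Set.ncard_coe_finset, card_powerset, card_range]

theorem Finset.exists_mem_symmDiff_sdiff_range_succ_eq {s t : Finset ℕ} {M : ℕ}
    (h : s \ range M ≠ t \ range M) :
    ∃ n, M ≤ n ∧ n ∈ symmDiff s t ∧ s \ range (n + 1) = t \ range (n + 1) := by
  set D := symmDiff (s \ range M) (t \ range M)
  have hD : D.Nonempty := symmDiff_nonempty.2 h
  have hmem : ∀ m, m ∈ D ↔ M ≤ m ∧ m ∈ symmDiff s t := by
    intro m
    simp only [D, mem_symmDiff, mem_sdiff, mem_range, not_lt]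
    tauto
  obtain ⟨hMn, hn⟩ := (hmem _).1 (D.max'_mem hD)
  have hagree : ∀ m, D.max' hD < m → (m ∈ s ↔ m ∈ t) := by
    intro m hm
    by_contra hc
    have := D.le_max' m ((hmem m).2 ⟨by omega, by rw [mem_symmDiff]; tauto⟩)
    omega
  refine ⟨D.max' hD, hMn, hn, ?_⟩
  ext m
  simp only [mem_sdiff, mem_range, not_lt]
  exact ⟨fun ⟨hm, hnm⟩ => ⟨(hagree m hnm).1 hm, hnm⟩, fun ⟨hm, hnm⟩ => ⟨(hagree m hnm).2 hm, hnm⟩⟩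

section SubsetSums

variable (b : ℕ → ℕ)

theorem sub_sum_range_le_sum_sub_sum {s t : Finset ℕ} {n : ℕ} (hs : n ∈ s) (ht : n ∉ t)
    (hst : s \ range (n + 1) = t \ range (n + 1)) :
    (b n : ℝ) - ∑ k ∈ range n, (b k : ℝ) ≤ ∑ k ∈ s, (b k : ℝ) - ∑ k ∈ t, (b k : ℝ) := by
  rw [← sum_inter_add_sum_sdiff s (range (n + 1)), ← sum_inter_add_sum_sdiff t (range (n + 1)),
    hst]
  have hlow : t ∩ range (n + 1) ⊆ range n := fun m hm => by
    obtain ⟨hmt, hmn⟩ := Finset.mem_inter.1 hm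
    exact Finset.mem_range.2
      (lt_of_le_of_ne (Finset.mem_range_succ_iff.1 hmn) fun h => ht (h ▸ hmt))
  have h1 := sum_le_sum_of_subset_of_nonneg (f := fun k => (b k : ℝ)) hlow
    fun k _ _ => Nat.cast_nonneg _
  have h2 := single_le_sum (f := fun k => (b k : ℝ)) (fun k _ => Nat.cast_nonneg _)
    (mem_inter.2 ⟨hs, self_mem_range_succ n⟩)
  linarith

theorem sdiff_range_eq_of_abs_sum_sub_sum_lt {s t : Finset ℕ} {M : ℕ}
    (h : ∀ n, M ≤ n →
      |∑ k ∈ s, (b k : ℝ) - ∑ k ∈ t, (b k : ℝ)| < b n - ∑ k ∈ range n, (b k : ℝ)) :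
    s \ range M = t \ range M := by
  by_contra hne
  obtain ⟨n, hMn, hn, hst⟩ := exists_mem_symmDiff_sdiff_range_succ_eq hne
  have hgap := h n hMn
  rcases mem_symmDiff.1 hn with ⟨hs, ht⟩ | ⟨ht, hs⟩
  · linarith [sub_sum_range_le_sum_sub_sum b hs ht hst, le_abs_self
      (∑ k ∈ s, (b k : ℝ) - ∑ k ∈ t, (b k : ℝ))]
  · linarith [sub_sum_range_le_sum_sub_sum b ht hs hst.symm, neg_abs_le
      (∑ k ∈ s, (b k : ℝ) - ∑ k ∈ t, (b k : ℝ))]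

theorem sum_injective_of_sum_range_lt (hb : ∀ n, ∑ k ∈ range n, (b k : ℝ) < b n) :
    Function.Injective fun s : Finset ℕ => ∑ k ∈ s, b k := by
  intro s t hst
  have hst' : ∑ k ∈ s, (b k : ℝ) = ∑ k ∈ t, (b k : ℝ) := by exact_mod_cast hst
  simpa using sdiff_range_eq_of_abs_sum_sub_sum_lt b (M := 0) fun n _ => by
    rw [hst', sub_self, abs_zero, sub_pos]
    exact hb n

theorem abs_sum_sub_sum_le_of_sdiff_range_eq {s t : Finset ℕ} {N : ℕ}
    (h : s \ range N = t \ range N) :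
    |∑ k ∈ s, (b k : ℝ) - ∑ k ∈ t, (b k : ℝ)| ≤ ∑ k ∈ range N, (b k : ℝ) := by
  rw [← sum_inter_add_sum_sdiff s (range N), ← sum_inter_add_sum_sdiff t (range N), h,
    abs_le]
  have hbounds : ∀ u : Finset ℕ, 0 ≤ ∑ k ∈ u ∩ range N, (b k : ℝ) ∧
      ∑ k ∈ u ∩ range N, (b k : ℝ) ≤ ∑ k ∈ range N, (b k : ℝ) := fun u =>
    ⟨sum_nonneg fun _ _ => Nat.cast_nonneg _,
      sum_le_sum_of_subset_of_nonneg inter_subset_right fun _ _ _ => Nat.cast_nonneg _⟩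
  have hs := hbounds s
  have ht := hbounds t
  constructor <;> linarith

def nearSubsets (s : Finset ℕ) (r : ℝ) : Set (Finset ℕ) :=
  {t | |∑ k ∈ t, (b k : ℝ) - ∑ k ∈ s, (b k : ℝ)| ≤ r}

variable {b}

theorem nearSubsets_subset_setOf_sdiff_range_eq {s : Finset ℕ} {r : ℝ} {M : ℕ}
    (hM : ∀ n, M ≤ n → r < b n - ∑ k ∈ range n, (b k : ℝ)) :
    nearSubsets b s r ⊆ {t | t \ range M = s \ range M} := fun _ ht =>
  sdiff_range_eq_of_abs_sum_sub_sum_lt b fun n hn => lt_of_le_of_lt ht (hM n hn)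

theorem ncard_nearSubsets_le {s : Finset ℕ} {r : ℝ} {M : ℕ}
    (hM : ∀ n, M ≤ n → r < b n - ∑ k ∈ range n, (b k : ℝ)) :
    (nearSubsets b s r).ncard ≤ 2 ^ M := by
  rw [← ncard_setOf_sdiff_range_eq s M]
  exact Set.ncard_le_ncard (nearSubsets_subset_setOf_sdiff_range_eq hM)
    (Set.finite_of_ncard_ne_zero (by simp [ncard_setOf_sdiff_range_eq]))

theorem two_pow_le_ncard_nearSubsets {s : Finset ℕ} {r : ℝ} {M N : ℕ}
    (hM : ∀ n, M ≤ n → r < b n - ∑ k ∈ range n, (b k : ℝ))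
    (hN : ∑ k ∈ range N, (b k : ℝ) ≤ r) :
    2 ^ N ≤ (nearSubsets b s r).ncard := by
  have hfin : (nearSubsets b s r).Finite :=
    (Set.finite_of_ncard_ne_zero (by simp [ncard_setOf_sdiff_range_eq])).subset
      (nearSubsets_subset_setOf_sdiff_range_eq (s := s) hM)
  rw [← ncard_setOf_sdiff_range_eq s N]
  exact Set.ncard_le_ncard (fun t ht =>
    (abs_sum_sub_sum_le_of_sdiff_range_eq b ht).trans hN) hfin

theorem ncard_setOf_near_eq_ncard_nearSubsets
    (hb : Function.Injective fun s : Finset ℕ => ∑ k ∈ s, b k) (c : ℕ) {s : Finset ℕ} {y : ℕ}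
    (hy : y = c + ∑ k ∈ s, b k) (r : ℝ) :
    {i ∈ Set.range fun t : Finset ℕ => c + ∑ k ∈ t, b k |
      (y : ℝ) - r ≤ i ∧ (i : ℝ) ≤ y + r}.ncard = (nearSubsets b s r).ncard := by
  have himage : {i ∈ Set.range fun t : Finset ℕ => c + ∑ k ∈ t, b k |
      (y : ℝ) - r ≤ i ∧ (i : ℝ) ≤ y + r} = (fun t => c + ∑ k ∈ t, b k) '' nearSubsets b s r := by
    ext i
    simp only [nearSubsets, Set.mem_ofPred_eq, Set.mem_range, Set.mem_image, abs_le, hy]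
    constructor
    · rintro ⟨⟨t, rfl⟩, h⟩
      exact ⟨t, by push_cast at h; constructor <;> linarith, rfl⟩
    · rintro ⟨t, ht, rfl⟩
      exact ⟨⟨t, rfl⟩, by push_cast; constructor <;> linarith⟩
  rw [himage]
  exact Set.ncard_image_of_injective _ ((add_right_injective c).comp hb)

end SubsetSums

section FloorPow

variable {x δ : ℝ}

theorem sum_range_floor_pow_le (hx : 1 < x) (n : ℕ) :
    ∑ k ∈ range n, (⌊x ^ k⌋₊ : ℝ) ≤ (x ^ n - 1) / (x - 1) := by
  rw [← geom_sum_eq hx.ne']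
  exact sum_le_sum fun k _ => Nat.floor_le (by positivity)

theorem mul_pow_sub_one_lt_floor_pow_sub_sum (hx : 2 < x) (n : ℕ) :
    (x - 2) / (x - 1) * (x ^ n - 1) < ⌊x ^ n⌋₊ - ∑ k ∈ range n, (⌊x ^ k⌋₊ : ℝ) := by
  have hsum := sum_range_floor_pow_le (by linarith) n
  have hfloor := Nat.lt_floor_add_one (x ^ n)
  have hsplit : (x - 2) / (x - 1) * (x ^ n - 1) = (x ^ n - 1) - (x ^ n - 1) / (x - 1) := by
    field_simp [show x - 1 ≠ 0 by linarith]
    ring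
  linarith

theorem sum_range_floor_pow_lt (hx : 2 < x) (n : ℕ) :
    ∑ k ∈ range n, (⌊x ^ k⌋₊ : ℝ) < ⌊x ^ n⌋₊ := by
  have hpos : 0 ≤ (x - 2) / (x - 1) * (x ^ n - 1) :=
    mul_nonneg (div_nonneg (by linarith) (by linarith)) (sub_nonneg.2 (one_le_pow₀ (by linarith)))
  linarith [mul_pow_sub_one_lt_floor_pow_sub_sum hx n]

theorem pow_rpow_eq_two_pow (hx : 0 ≤ x) (hxδ : x ^ δ = 2) (n : ℕ) : (x ^ n) ^ δ = 2 ^ n := by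
  rw [← Real.rpow_pow_comm hx, hxδ]

theorem exists_sum_range_floor_pow_le (hx : 2 ≤ x) (hxδ : x ^ δ = 2) (hδ : 0 < δ) {r : ℝ}
    (hr : 1 ≤ r) : ∃ N, ∑ k ∈ range N, (⌊x ^ k⌋₊ : ℝ) ≤ r ∧ r ^ δ ≤ 2 * 2 ^ N := by
  obtain ⟨N, hxN, hrN⟩ := exists_nat_pow_near hr (by linarith : 1 < x)
  refine ⟨N, ?_, ?_⟩
  have hxN1 : 1 ≤ x ^ N := one_le_pow₀ (by linarith)
  · calc ∑ k ∈ range N, (⌊x ^ k⌋₊ : ℝ) ≤ (x ^ N - 1) / (x - 1) :=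
          sum_range_floor_pow_le (by linarith) N
      _ ≤ x ^ N - 1 := div_le_self (by linarith) (by linarith)
      _ ≤ r := by linarith
  · calc r ^ δ ≤ (x ^ (N + 1)) ^ δ := Real.rpow_le_rpow (by linarith) hrN.le hδ.le
      _ = 2 * 2 ^ N := by rw [pow_rpow_eq_two_pow (by linarith) hxδ, pow_succ']

theorem exists_forall_exists_lt_floor_pow_sub_sum (hx : 2 < x) (hxδ : x ^ δ = 2) (hδ : 0 < δ) :
    ∃ C > 0, ∀ r : ℝ, 1 ≤ r → ∃ M,
      (∀ n, M ≤ n → r < ⌊x ^ n⌋₊ - ∑ k ∈ range n, (⌊x ^ k⌋₊ : ℝ)) ∧ (2 : ℝ) ^ M ≤ C * r ^ δ := by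
  set K := (x - 1) / (x - 2) + 1
  have hc0 : 0 < (x - 2) / (x - 1) := div_pos (by linarith) (by linarith)
  have hc : (x - 2) / (x - 1) * (K - 1) = 1 := by
    simp only [K, add_sub_cancel_right]
    field_simp [show x - 1 ≠ 0 by linarith, show x - 2 ≠ 0 by linarith]
  have hK : 1 ≤ K := le_add_of_nonneg_left (div_nonneg (by linarith) (by linarith))
  refine ⟨2 * K ^ δ, mul_pos two_pos (Real.rpow_pos_of_pos (by linarith) δ), fun r hr => ?_⟩
  obtain ⟨m, hxm, hKr⟩ := exists_nat_pow_near (one_le_mul_of_one_le_of_one_le hK hr)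
    (by linarith : 1 < x)
  refine ⟨m + 1, fun n hn => ?_, ?_⟩
  · have hxn : x ^ (m + 1) ≤ x ^ n := pow_le_pow_right₀ (by linarith) hn
    calc r ≤ (x - 2) / (x - 1) * (K * r - 1) := by nlinarith
      _ ≤ (x - 2) / (x - 1) * (x ^ n - 1) := by gcongr; linarith
      _ < _ := mul_pow_sub_one_lt_floor_pow_sub_sum hx n
  · calc (2 : ℝ) ^ (m + 1) = 2 * (x ^ m) ^ δ := by
          rw [pow_rpow_eq_two_pow (by linarith) hxδ, pow_succ']
      _ ≤ 2 * (K * r) ^ δ := by gcongr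
      _ = 2 * K ^ δ * r ^ δ := by rw [Real.mul_rpow (by linarith) (by linarith), mul_assoc]

end FloorPow

theorem I0_eq_range (δ : ℝ) :
    I0 δ = Set.range fun s : Finset ℕ => 1 + ∑ n ∈ s, ⌊((2 : ℝ) ^ δ⁻¹) ^ n⌋₊ := by
  ext m
  simp only [I0, Set.mem_ofPred_eq, Set.mem_range, Int.floor_toNat, eq_comm (a := m)]
  simp only [← Real.rpow_natCast, ← Real.rpow_mul zero_le_two, inv_mul_eq_div]

theorem stmt15 (δ : ℝ) (hδ0 : 0 < δ) (hδ1 : δ < 1) :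
    ∃ c C : ℝ, 0 < c ∧ 0 < C ∧ ∀ y ∈ I0 δ, ∀ r : ℝ, 1 ≤ r →
      c * r ^ δ ≤ ({i ∈ I0 δ | (y : ℝ) - r ≤ (i : ℝ) ∧ (i : ℝ) ≤ (y : ℝ) + r}.ncard : ℝ) ∧
      ({i ∈ I0 δ | (y : ℝ) - r ≤ (i : ℝ) ∧ (i : ℝ) ≤ (y : ℝ) + r}.ncard : ℝ) ≤ C * r ^ δ := by
  have hxδ : ((2 : ℝ) ^ δ⁻¹) ^ δ = 2 := Real.rpow_inv_rpow zero_le_two hδ0.ne'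
  have hx : 2 < (2 : ℝ) ^ δ⁻¹ := by
    simpa using Real.rpow_lt_rpow_of_exponent_lt one_lt_two ((one_lt_inv₀ hδ0).2 hδ1)
  rw [I0_eq_range]
  generalize (2 : ℝ) ^ δ⁻¹ = x at hx hxδ ⊢
  have hinj := sum_injective_of_sum_range_lt (fun n => ⌊x ^ n⌋₊) (sum_range_floor_pow_lt hx)
  obtain ⟨C, hC, hupper⟩ := exists_forall_exists_lt_floor_pow_sub_sum hx hxδ hδ0
  refine ⟨1 / 2, C, by norm_num, hC, ?_⟩
  rintro y ⟨s, hs⟩ r hr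
  rw [ncard_setOf_near_eq_ncard_nearSubsets hinj 1 hs.symm]
  obtain ⟨M, hgap, hM⟩ := hupper r hr
  obtain ⟨N, hsum, hN⟩ := exists_sum_range_floor_pow_le hx.le hxδ hδ0 hr
  have hlow : 2 ^ N ≤ (nearSubsets _ s r).ncard := two_pow_le_ncard_nearSubsets hgap hsum
  have hup : (nearSubsets _ s r).ncard ≤ 2 ^ M := ncard_nearSubsets_le hgap
  constructor
  · calc 1 / 2 * r ^ δ ≤ (2 : ℝ) ^ N := by linarith
      _ ≤ _ := by exact_mod_cast hlow
  · calc _ ≤ (2 : ℝ) ^ M := by exact_mod_cast hup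
      _ ≤ _ := hM
end

section
/- Let I ⊂ ℕ be infinite and h > 0. If #(B(y,r) ∩ I) ≍ r^h for all y ∈ I and 1 ≤ r ≤ y/2, and there exists m with [k, mk] ∩ I ≠ ∅ for all k, then for every t > h/2 the series ∑_{i∈I, i>k} i^{−2t} converges and is comparable to k^{h−2t}, while for t ≤ h/2 the series ∑_{i∈I} i^{−2t} diverges. -/
/-!
Upper regularity bounds the number of points of `I` in a dyadic block `(a, 2a]` by `2 C a^h`,
since each half of the block fits in a single admissible ball. Summing `i^(-2t) ≤ a^(-2t)` over
the blocks `(2^n k, 2^(n+1) k]` gives a geometric series of ratio `2^(h - 2t)`, whence the upper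
bound for `t > h/2`. Conversely, the gap condition gives `y ∈ I ∩ [4k, 4mk]`, and lower regularity
puts at least `c (2k)^h` points of `I` into `B(y, y/2) ⊆ [2k, 6mk]`, each contributing at least
`(6mk)^(-2t)`; this is the lower bound. At `t = h/2` it no longer decays in `k`, so the series
diverges, and a fortiori so does every series with `t < h/2`.
-/

open Real Set

open Finset in
theorem sum_Ioc_two_pow_mul_eq_sum_range (f : ℕ → ℝ) (k N : ℕ) :
    ∑ i ∈ Ioc k (2 ^ N * k), f i
      = ∑ n ∈ range N, ∑ i ∈ Ioc (2 ^ n * k) (2 ^ (n + 1) * k), f i := by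
  induction N with
  | zero => simp
  | succ N ih =>
    rw [sum_range_succ, ← ih, sum_Ioc_consecutive]
    · exact Nat.le_mul_of_pos_left k (Nat.two_pow_pos N)
    · exact Nat.mul_le_mul_right k (Nat.pow_le_pow_right two_pos N.le_succ)

open Finset in
theorem summable_and_tsum_le_of_dyadic_blocks {f : ℕ → ℝ} {k : ℕ} {A q : ℝ}
    (hf : ∀ i, 0 ≤ f i) (hfk : ∀ i ≤ k, f i = 0) (hk : 1 ≤ k)
    (hA : 0 ≤ A) (hq0 : 0 ≤ q) (hq1 : q < 1)
    (hblock : ∀ n, ∑ i ∈ Ioc (2 ^ n * k) (2 ^ (n + 1) * k), f i ≤ A * q ^ n) :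
    Summable f ∧ ∑' i, f i ≤ A * (1 - q)⁻¹ := by
  have hdyadic (N : ℕ) : ∑ i ∈ Ioc k (2 ^ N * k), f i ≤ A * (1 - q)⁻¹ :=
    calc ∑ i ∈ Ioc k (2 ^ N * k), f i ≤ ∑ n ∈ range N, A * q ^ n := by
          rw [sum_Ioc_two_pow_mul_eq_sum_range]; exact sum_le_sum fun n _ => hblock n
      _ = A * ∑ n ∈ range N, q ^ n := by rw [mul_sum]
      _ ≤ A * (1 - q)⁻¹ := by
          gcongr
          rw [← tsum_geometric_of_lt_one hq0 hq1]
          exact (summable_geometric_of_lt_one hq0 hq1).sum_le_tsum _ fun n _ => pow_nonneg hq0 n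
  have hpartial (N : ℕ) : ∑ i ∈ range N, f i ≤ A * (1 - q)⁻¹ := by
    refine le_trans ?_ (hdyadic N)
    rw [← sum_filter_of_ne (p := (k < ·)) fun i _ hi => by_contra fun hki => hi (hfk i (by omega))]
    refine sum_le_sum_of_subset_of_nonneg (fun i hi => ?_) fun i _ _ => hf i
    simp only [mem_filter, Finset.mem_range, Finset.mem_Ioc] at hi ⊢
    have : N ≤ 2 ^ N * k := N.lt_two_pow_self.le.trans (Nat.le_mul_of_pos_right _ hk)
    omega
  exact ⟨summable_of_sum_range_le hf hpartial, Real.tsum_le_of_sum_range_le hf hpartial⟩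

theorem summable_subtype_of_summable_tail {f : ℕ → ℝ} {s : Set ℕ} {k : ℕ}
    (hf : Summable fun i : {i // i ∈ s ∧ k < i} => f i) : Summable fun i : s => f i := by
  refine summable_subtype_iff_indicator.2
    ((summable_subtype_iff_indicator (s := {i | i ∈ s ∧ k < i}).1 hf).congr_atTop ?_)
  filter_upwards [Filter.eventually_gt_atTop k] with i hi
  by_cases his : i ∈ s
  · rw [indicator_of_mem his, indicator_of_mem (show i ∈ {i | i ∈ s ∧ k < i} from ⟨his, hi⟩)]
  · rw [indicator_of_notMem his, indicator_of_notMem fun h => his h.1]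

theorem one_le_of_forall_exists_mem_Icc_mul {I : Set ℕ} {m : ℕ}
    (hm : ∀ k : ℕ, 1 ≤ k → ∃ i ∈ I, k ≤ i ∧ i ≤ m * k) : 1 ≤ m := by
  obtain ⟨i, -, h₁, h₂⟩ := hm 1 le_rfl
  omega

theorem natCast_rpow_neg_le_rpow_neg {s t : ℝ} (hs : 0 < s) (hts : t ≤ s) (n : ℕ) :
    (n : ℝ) ^ (-s) ≤ (n : ℝ) ^ (-t) := by
  rcases n.eq_zero_or_pos with rfl | hn
  · rw [Nat.cast_zero, zero_rpow (by linarith)]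
    positivity
  · exact rpow_le_rpow_of_exponent_le (by exact_mod_cast hn) (by linarith)

def UpperRegular (I : Set ℕ) (h C : ℝ) : Prop :=
  ∀ y ∈ I, ∀ r : ℝ, 1 ≤ r → r ≤ (y : ℝ) / 2 →
    ({i ∈ I | (y : ℝ) - r ≤ (i : ℝ) ∧ (i : ℝ) ≤ (y : ℝ) + r}.ncard : ℝ) ≤ C * r ^ h

def LowerRegular (I : Set ℕ) (h c : ℝ) : Prop :=
  ∀ y ∈ I, ∀ r : ℝ, 1 ≤ r → r ≤ (y : ℝ) / 2 →
    c * r ^ h ≤ ({i ∈ I | (y : ℝ) - r ≤ (i : ℝ) ∧ (i : ℝ) ≤ (y : ℝ) + r}.ncard : ℝ)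

theorem finite_setOf_mem_and_le (I : Set ℕ) (P : ℕ → Prop) (b : ℝ) :
    {i ∈ I | P i ∧ (i : ℝ) ≤ b}.Finite :=
  (finite_Iic ⌈b⌉₊).subset fun _ hi => Nat.cast_le.1 (hi.2.2.trans (Nat.le_ceil b))

variable {I : Set ℕ} {h c C : ℝ}

namespace UpperRegular

theorem card_le_of_subset_Icc (hI : UpperRegular I h C) (hC : 0 ≤ C) {T : Finset ℕ} {x r : ℝ}
    (hr : 1 ≤ r) (hTI : ↑T ⊆ I) (hTx : ∀ i ∈ T, x ≤ i ∧ (i : ℝ) ≤ x + r)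
    (hT2 : ∀ i ∈ T, 2 * r ≤ i) : (T.card : ℝ) ≤ C * r ^ h := by
  obtain rfl | ⟨y, hy⟩ := T.eq_empty_or_nonempty
  · simpa using by positivity
  have hball : ↑T ⊆ {i ∈ I | (y : ℝ) - r ≤ (i : ℝ) ∧ (i : ℝ) ≤ (y : ℝ) + r} := fun i hi => by
    have := hTx i hi; have := hTx y hy
    exact ⟨hTI hi, by linarith, by linarith⟩
  calc (T.card : ℝ) = ((T : Set ℕ).ncard : ℝ) := by rw [ncard_coe_finset]
    _ ≤ _ := by exact_mod_cast ncard_le_ncard hball (finite_setOf_mem_and_le _ _ _)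
    _ ≤ C * r ^ h := hI y (hTI hy) r hr (by linarith [hT2 y hy])

theorem card_filter_Ioc_le (hI : UpperRegular I h C) (hh : 0 ≤ h) (hC : 0 ≤ C)
    [DecidablePred (· ∈ I)] {a : ℕ} (ha : 1 ≤ a) :
    (({i ∈ Finset.Ioc a (2 * a) | i ∈ I} : Finset ℕ).card : ℝ) ≤ 2 * C * (a : ℝ) ^ h := by
  set T := {i ∈ Finset.Ioc a (2 * a) | i ∈ I}
  -- admissible radii are at least `1`; this only matters for `a = 1`
  set r := max 1 ((a : ℝ) / 2)
  have ha' : (1 : ℝ) ≤ a := by exact_mod_cast ha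
  have hr : (a : ℝ) / 2 ≤ r := le_max_right _ _
  have hT (i : ℕ) (hi : i ∈ T) : i ∈ I ∧ (a : ℝ) + 1 ≤ i ∧ (i : ℝ) ≤ 2 * a := by
    obtain ⟨hi, hiI⟩ := Finset.mem_filter.1 hi
    obtain ⟨h₁, h₂⟩ := Finset.mem_Ioc.1 hi
    exact ⟨hiI, by exact_mod_cast h₁, by exact_mod_cast h₂⟩
  have hhalf (p : ℕ → Prop) [DecidablePred p] (x : ℝ)
      (hx : ∀ i ∈ T, p i → x ≤ i ∧ (i : ℝ) ≤ x + r) :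
      (({i ∈ T | p i} : Finset ℕ).card : ℝ) ≤ C * r ^ h := by
    refine hI.card_le_of_subset_Icc hC (le_max_left _ _)
      (fun i hi => (hT i (Finset.mem_filter.1 hi).1).1)
      (fun i hi => hx i (Finset.mem_filter.1 hi).1 (Finset.mem_filter.1 hi).2) fun i hi => ?_
    have := hT i (Finset.mem_filter.1 hi).1
    rw [mul_max_of_nonneg _ _ zero_le_two]
    exact max_le (by linarith) (by linarith)
  have hleft := hhalf (fun i => (i : ℝ) ≤ a + a / 2) a fun i hi hp =>
    ⟨by linarith [hT i hi], by linarith⟩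
  have hright := hhalf (fun i => ¬ (i : ℝ) ≤ a + a / 2) (a + a / 2) fun i hi hp =>
    ⟨by linarith, by linarith [hT i hi]⟩
  have hra : r ^ h ≤ (a : ℝ) ^ h := rpow_le_rpow (by positivity) (max_le ha' (by linarith)) hh
  rw [← Finset.card_filter_add_card_filter_not (fun i : ℕ => (i : ℝ) ≤ a + a / 2)]
  push_cast
  nlinarith

theorem sum_Ioc_indicator_rpow_neg_le (hI : UpperRegular I h C) (hh : 0 ≤ h) (hC : 0 ≤ C)
    {e : ℝ} (he : 0 ≤ e) {S : Set ℕ} (hS : S ⊆ I) {a : ℕ} (ha : 1 ≤ a) :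
    ∑ i ∈ Finset.Ioc a (2 * a), S.indicator (fun i : ℕ => (i : ℝ) ^ (-e)) i
      ≤ 2 * C * (a : ℝ) ^ (h - e) := by
  classical
  have ha' : (0 : ℝ) < a := by exact_mod_cast ha
  calc ∑ i ∈ Finset.Ioc a (2 * a), S.indicator (fun i : ℕ => (i : ℝ) ^ (-e)) i
      ≤ ∑ i ∈ Finset.Ioc a (2 * a), if i ∈ I then (a : ℝ) ^ (-e) else 0 := by
        refine Finset.sum_le_sum fun i hi => ?_
        have hai : (a : ℝ) ≤ i := by exact_mod_cast (Finset.mem_Ioc.1 hi).1.le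
        by_cases hiS : i ∈ S
        · rw [indicator_of_mem hiS, if_pos (hS hiS)]
          exact rpow_le_rpow_of_nonpos ha' hai (neg_nonpos.2 he)
        · rw [indicator_of_notMem hiS]
          split_ifs <;> positivity
    _ = (({i ∈ Finset.Ioc a (2 * a) | i ∈ I} : Finset ℕ).card : ℝ) * (a : ℝ) ^ (-e) := by
        rw [← Finset.sum_filter, Finset.sum_const, nsmul_eq_mul]
    _ ≤ 2 * C * (a : ℝ) ^ h * (a : ℝ) ^ (-e) := by
        gcongr; exact hI.card_filter_Ioc_le hh hC ha
    _ = 2 * C * (a : ℝ) ^ (h - e) := by rw [mul_assoc, ← rpow_add ha', sub_eq_add_neg]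

theorem summable_tail_and_tsum_le (hI : UpperRegular I h C) (hh : 0 ≤ h) (hC : 0 ≤ C)
    {e : ℝ} (he : h < e) {k : ℕ} (hk : 1 ≤ k) :
    (Summable fun i : {i : ℕ // i ∈ I ∧ k < i} => ((i : ℕ) : ℝ) ^ (-e)) ∧
      ∑' i : {i : ℕ // i ∈ I ∧ k < i}, ((i : ℕ) : ℝ) ^ (-e)
        ≤ 2 * C * (1 - 2 ^ (h - e))⁻¹ * (k : ℝ) ^ (h - e) := by
  have hk' : (0 : ℝ) ≤ k := k.cast_nonneg
  have hbound := summable_and_tsum_le_of_dyadic_blocks (k := k)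
    (f := {i | i ∈ I ∧ k < i}.indicator fun i : ℕ => (i : ℝ) ^ (-e))
    (A := 2 * C * (k : ℝ) ^ (h - e)) (q := 2 ^ (h - e))
    (fun i => indicator_nonneg (fun i _ => by positivity) i)
    (fun i hi => indicator_of_notMem (fun hmem => absurd hmem.2 (by omega)) _) hk (by positivity)
    (by positivity) (rpow_lt_one_of_one_lt_of_neg one_lt_two (by linarith))
    fun n => by
      have := hI.sum_Ioc_indicator_rpow_neg_le hh hC (by linarith) (S := {i | i ∈ I ∧ k < i})
        (fun i hi => hi.1) (Nat.one_le_iff_ne_zero.2 (by positivity : 2 ^ n * k ≠ 0))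
      rw [pow_succ', mul_assoc]
      refine this.trans_eq ?_
      push_cast
      rw [mul_rpow (by positivity) hk', ← rpow_pow_comm zero_le_two]
      ring
  refine ⟨summable_subtype_iff_indicator.2 hbound.1, ?_⟩
  exact (tsum_subtype {i | i ∈ I ∧ k < i} fun i : ℕ => (i : ℝ) ^ (-e)).trans_le
    (hbound.2.trans_eq (mul_right_comm _ _ _))

end UpperRegular

namespace LowerRegular

theorem exists_finset_card_ge (hI : LowerRegular I h c) (hh : 0 ≤ h) (hc : 0 ≤ c) {m : ℕ}
    (hm : ∀ k : ℕ, 1 ≤ k → ∃ i ∈ I, k ≤ i ∧ i ≤ m * k) {k : ℕ} (hk : 1 ≤ k) :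
    ∃ F : Finset ℕ, (∀ i ∈ F, i ∈ I ∧ k < i ∧ i ≤ 6 * m * k) ∧ c * (2 * k) ^ h ≤ F.card := by
  obtain ⟨y, hyI, hy₁, hy₂⟩ := hm (4 * k) (by omega)
  have hk' : (1 : ℝ) ≤ k := by exact_mod_cast hk
  have hy₁' : 4 * (k : ℝ) ≤ y := by exact_mod_cast hy₁
  have hy₂' : (y : ℝ) ≤ m * (4 * k) := by exact_mod_cast hy₂
  have hfin := finite_setOf_mem_and_le I (fun i => (y : ℝ) - y / 2 ≤ i) ((y : ℝ) + y / 2)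
  refine ⟨hfin.toFinset, fun i hi => ?_, ?_⟩
  · obtain ⟨hiI, hi₁, hi₂⟩ := hfin.mem_toFinset.1 hi
    refine ⟨hiI, ?_, ?_⟩
    · exact_mod_cast (show (k : ℝ) < i by linarith)
    · exact_mod_cast (show (i : ℝ) ≤ 6 * m * k by linarith)
  · calc c * (2 * k) ^ h ≤ c * ((y : ℝ) / 2) ^ h := by gcongr; linarith
      _ ≤ _ := hI y hyI _ (by linarith) le_rfl
      _ = hfin.toFinset.card := by rw [ncard_eq_toFinset_card _ hfin]

theorem exists_finset_sum_rpow_neg_ge (hI : LowerRegular I h c) (hh : 0 ≤ h) (hc : 0 ≤ c)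
    {m : ℕ} (hm : ∀ k : ℕ, 1 ≤ k → ∃ i ∈ I, k ≤ i ∧ i ≤ m * k) {e : ℝ} (he : 0 ≤ e)
    {k : ℕ} (hk : 1 ≤ k) :
    ∃ F : Finset ℕ, (∀ i ∈ F, i ∈ I ∧ k < i) ∧
      c * 2 ^ h * (6 * m) ^ (-e) * (k : ℝ) ^ (h - e) ≤ ∑ i ∈ F, (i : ℝ) ^ (-e) := by
  obtain ⟨F, hF, hcard⟩ := hI.exists_finset_card_ge hh hc hm hk
  refine ⟨F, fun i hi => ⟨(hF i hi).1, (hF i hi).2.1⟩, ?_⟩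
  have hk' : (0 : ℝ) < k := by exact_mod_cast hk
  have hterm (i : ℕ) (hi : i ∈ F) : (6 * m * k : ℝ) ^ (-e) ≤ (i : ℝ) ^ (-e) := by
    obtain ⟨-, hki, him⟩ := hF i hi
    exact rpow_le_rpow_of_nonpos (by exact_mod_cast k.zero_le.trans_lt hki)
      (by exact_mod_cast him) (neg_nonpos.2 he)
  calc c * 2 ^ h * (6 * m) ^ (-e) * (k : ℝ) ^ (h - e)
      = c * (2 * k) ^ h * (6 * m * k : ℝ) ^ (-e) := by
        rw [mul_rpow (by positivity) hk'.le, mul_rpow (by positivity) hk'.le, sub_eq_add_neg,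
          rpow_add hk']
        ring
    _ ≤ F.card * (6 * m * k : ℝ) ^ (-e) := by gcongr
    _ ≤ ∑ i ∈ F, (i : ℝ) ^ (-e) := by
        rw [← nsmul_eq_mul]; exact F.card_nsmul_le_sum _ _ hterm

theorem le_tsum_tail (hI : LowerRegular I h c) (hh : 0 ≤ h) (hc : 0 ≤ c) {m : ℕ}
    (hm : ∀ k : ℕ, 1 ≤ k → ∃ i ∈ I, k ≤ i ∧ i ≤ m * k) {e : ℝ} (he : 0 ≤ e) {k : ℕ} (hk : 1 ≤ k)
    (hsum : Summable fun i : {i : ℕ // i ∈ I ∧ k < i} => ((i : ℕ) : ℝ) ^ (-e)) :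
    c * 2 ^ h * (6 * m) ^ (-e) * (k : ℝ) ^ (h - e)
      ≤ ∑' i : {i : ℕ // i ∈ I ∧ k < i}, ((i : ℕ) : ℝ) ^ (-e) := by
  classical
  obtain ⟨F, hF, hsumF⟩ := hI.exists_finset_sum_rpow_neg_ge hh hc hm he hk
  rw [← F.sum_subtype_of_mem _ hF] at hsumF
  exact hsumF.trans (hsum.sum_le_tsum _ fun i _ => by positivity)

theorem not_summable_rpow_neg (hI : LowerRegular I h c) (hh : 0 ≤ h) (hc : 0 < c) {m : ℕ}
    (hm : ∀ k : ℕ, 1 ≤ k → ∃ i ∈ I, k ≤ i ∧ i ≤ m * k) :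
    ¬ Summable fun i : I => ((i : ℕ) : ℝ) ^ (-h) := by
  classical
  intro hsum
  have hm1 : (1 : ℝ) ≤ m := by exact_mod_cast one_le_of_forall_exists_mem_Icc_mul hm
  set ε := c * 2 ^ h * (6 * m : ℝ) ^ (-h)
  have hε : 0 < ε := by
    have : (0 : ℝ) < (6 * m : ℝ) ^ (-h) := rpow_pos_of_pos (by linarith) _
    positivity
  obtain ⟨s, hs⟩ := hsum.vanishing (Iio_mem_nhds hε)
  set k := s.sup (fun i => (i : ℕ)) + 1
  obtain ⟨F, hF, hsumF⟩ := hI.exists_finset_sum_rpow_neg_ge hh hc.le hm hh (k := k) (by omega)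
  have hdisj : Disjoint (F.subtype (· ∈ I)) s := Finset.disjoint_left.2 fun i hiF his => by
    have hki := (hF i (Finset.mem_subtype.1 hiF)).2
    have := Finset.le_sup (f := fun i : I => (i : ℕ)) his
    omega
  have hlt := hs _ hdisj
  rw [mem_Iio, F.sum_subtype_of_mem (fun i : ℕ => (i : ℝ) ^ (-h)) fun i hi => (hF i hi).1] at hlt
  rw [sub_self, rpow_zero, mul_one] at hsumF
  linarith

end LowerRegular

theorem stmt17_general (I : Set ℕ) (h : ℝ) (hh : 0 < h)
    (c C : ℝ) (hc : 0 < c) (hC : 0 < C)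
    (hcount : ∀ y ∈ I, ∀ r : ℝ, 1 ≤ r → r ≤ (y : ℝ) / 2 →
      c * r ^ h ≤ ({i ∈ I | (y : ℝ) - r ≤ (i : ℝ) ∧ (i : ℝ) ≤ (y : ℝ) + r}.ncard : ℝ) ∧
      ({i ∈ I | (y : ℝ) - r ≤ (i : ℝ) ∧ (i : ℝ) ≤ (y : ℝ) + r}.ncard : ℝ) ≤ C * r ^ h)
    (m : ℕ) (hm : ∀ k : ℕ, 1 ≤ k → ∃ i ∈ I, k ≤ i ∧ i ≤ m * k) :
    (∀ t : ℝ, h / 2 < t →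
      Summable (fun i : I => ((i : ℕ) : ℝ) ^ (-(2 * t))) ∧
      ∃ c' C' : ℝ, 0 < c' ∧ 0 < C' ∧ ∀ k : ℕ, 1 ≤ k →
        c' * (k : ℝ) ^ (h - 2 * t)
            ≤ ∑' i : {i : ℕ // i ∈ I ∧ k < i}, ((i : ℕ) : ℝ) ^ (-(2 * t)) ∧
        (∑' i : {i : ℕ // i ∈ I ∧ k < i}, ((i : ℕ) : ℝ) ^ (-(2 * t)))
            ≤ C' * (k : ℝ) ^ (h - 2 * t)) ∧
    (∀ t : ℝ, t ≤ h / 2 → ¬ Summable (fun i : I => ((i : ℕ) : ℝ) ^ (-(2 * t)))) := by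
  have hlow : LowerRegular I h c := fun y hy r h₁ h₂ => (hcount y hy r h₁ h₂).1
  have hup : UpperRegular I h C := fun y hy r h₁ h₂ => (hcount y hy r h₁ h₂).2
  refine ⟨fun t ht => ?_, fun t ht hsum => ?_⟩
  · have htail (k : ℕ) (hk : 1 ≤ k) :=
      hup.summable_tail_and_tsum_le hh.le hC.le (e := 2 * t) (by linarith) hk
    refine ⟨summable_subtype_of_summable_tail (f := fun i : ℕ => (i : ℝ) ^ (-(2 * t)))
      (htail 1 le_rfl).1,
      c * 2 ^ h * (6 * m) ^ (-(2 * t)), 2 * C * (1 - 2 ^ (h - 2 * t))⁻¹, ?_, ?_, fun k hk =>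
        ⟨hlow.le_tsum_tail hh.le hc.le hm (by linarith) hk (htail k hk).1, (htail k hk).2⟩⟩
    · have hm1 : (1 : ℝ) ≤ m := by exact_mod_cast one_le_of_forall_exists_mem_Icc_mul hm
      have := rpow_pos_of_pos (by linarith : (0 : ℝ) < 6 * m) (-(2 * t))
      positivity
    · have : (2 : ℝ) ^ (h - 2 * t) < 1 := rpow_lt_one_of_one_lt_of_neg one_lt_two (by linarith)
      have : 0 < 1 - (2 : ℝ) ^ (h - 2 * t) := by linarith
      positivity
  · exact hlow.not_summable_rpow_neg hh.le hc hm (hsum.of_nonneg_of_le (fun i => by positivity)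
      fun i => natCast_rpow_neg_le_rpow_neg hh (by linarith) i)

theorem stmt17 (I : Set ℕ) (hinf : I.Infinite) (h : ℝ) (hh : 0 < h)
    (c C : ℝ) (hc : 0 < c) (hC : 0 < C)
    (hcount : ∀ y ∈ I, ∀ r : ℝ, 1 ≤ r → r ≤ (y : ℝ) / 2 →
      c * r ^ h ≤ ({i ∈ I | (y : ℝ) - r ≤ (i : ℝ) ∧ (i : ℝ) ≤ (y : ℝ) + r}.ncard : ℝ) ∧
      ({i ∈ I | (y : ℝ) - r ≤ (i : ℝ) ∧ (i : ℝ) ≤ (y : ℝ) + r}.ncard : ℝ) ≤ C * r ^ h)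
    (m : ℕ) (hm : ∀ k : ℕ, 1 ≤ k → ∃ i ∈ I, k ≤ i ∧ i ≤ m * k) :
    (∀ t : ℝ, h / 2 < t →
      Summable (fun i : I => ((i : ℕ) : ℝ) ^ (-(2 * t))) ∧
      ∃ c' C' : ℝ, 0 < c' ∧ 0 < C' ∧ ∀ k : ℕ, 1 ≤ k →
        c' * (k : ℝ) ^ (h - 2 * t)
            ≤ ∑' i : {i : ℕ // i ∈ I ∧ k < i}, ((i : ℕ) : ℝ) ^ (-(2 * t)) ∧
        (∑' i : {i : ℕ // i ∈ I ∧ k < i}, ((i : ℕ) : ℝ) ^ (-(2 * t)))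
            ≤ C' * (k : ℝ) ^ (h - 2 * t)) ∧
    (∀ t : ℝ, t ≤ h / 2 → ¬ Summable (fun i : I => ((i : ℕ) : ℝ) ^ (-(2 * t)))) :=
  stmt17_general I h hh c C hc hC hcount m hm
end

section
/- Let I ⊂ ℕ be infinite and h > 0. If the tail comparison ∑_{i∈I, i>k} i^{−2h} ≍ k^{−h} holds for all k ∈ ℕ, then there exists m ∈ ℕ such that [k, mk] ∩ I ≠ ∅ for every k ∈ ℕ. -/
open Real Set

theorem stmt18 (I : Set ℕ) (hinf : I.Infinite) (h : ℝ) (hh : 0 < h)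
    (C : ℝ) (hC : 1 ≤ C)
    (htail : ∀ k : ℕ, 1 ≤ k →
      C⁻¹ * (k : ℝ) ^ (-h) ≤ ∑' i : {i : ℕ // i ∈ I ∧ k < i}, ((i : ℕ) : ℝ) ^ (-(2 * h)) ∧
      (∑' i : {i : ℕ // i ∈ I ∧ k < i}, ((i : ℕ) : ℝ) ^ (-(2 * h))) ≤ C * (k : ℝ) ^ (-h)) :
    ∃ m : ℕ, ∀ k : ℕ, 1 ≤ k → ∃ i ∈ I, k ≤ i ∧ i ≤ m * k := by
  have hC0 : (0:ℝ) < C := lt_of_lt_of_le one_pos hC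
  set m : ℕ := ⌈C ^ (2 / h)⌉₊ + 1 with hm
  have hm1 : 1 ≤ m := Nat.le_add_left 1 _
  have hmgt : C ^ (2 / h) < (m : ℝ) := by
    calc C ^ (2 / h) ≤ (⌈C ^ (2 / h)⌉₊ : ℝ) := Nat.le_ceil _
      _ < (m : ℝ) := by exact_mod_cast Nat.lt_succ_self _
  have hmpow : C ^ (2:ℝ) < (m : ℝ) ^ h := by
    have h1 : (C ^ (2 / h)) ^ h < (m : ℝ) ^ h :=
      Real.rpow_lt_rpow (by positivity) hmgt hh
    rwa [← Real.rpow_mul hC0.le, div_mul_cancel₀ _ hh.ne'] at h1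
  refine ⟨m, fun k hk => ?_⟩
  by_contra hcon
  push_neg at hcon
  have hset : {i : ℕ | i ∈ I ∧ k < i} = {i : ℕ | i ∈ I ∧ m * k < i} := by
    ext i
    simp only [Set.mem_setOf_eq]
    constructor
    · rintro ⟨hi, hki⟩
      exact ⟨hi, hcon i hi hki.le⟩
    · rintro ⟨hi, hki⟩
      refine ⟨hi, lt_of_le_of_lt ?_ hki⟩
      calc k = 1 * k := (one_mul k).symm
        _ ≤ m * k := Nat.mul_le_mul_right k hm1
  have hsum : (∑' i : {i : ℕ // i ∈ I ∧ k < i}, ((i : ℕ) : ℝ) ^ (-(2 * h)))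
      = ∑' i : {i : ℕ // i ∈ I ∧ m * k < i}, ((i : ℕ) : ℝ) ^ (-(2 * h)) := by
    calc (∑' i : {i : ℕ // i ∈ I ∧ k < i}, ((i : ℕ) : ℝ) ^ (-(2 * h)))
        = ∑' i : ℕ, Set.indicator {i : ℕ | i ∈ I ∧ k < i} (fun i => ((i : ℕ) : ℝ) ^ (-(2 * h))) i := by
          exact tsum_subtype {i : ℕ | i ∈ I ∧ k < i} fun i => ((i : ℕ) : ℝ) ^ (-(2 * h))
      _ = ∑' i : ℕ, Set.indicator {i : ℕ | i ∈ I ∧ m * k < i} (fun i => ((i : ℕ) : ℝ) ^ (-(2 * h))) i := by rw [hset]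
      _ = _ := by
          exact (tsum_subtype {i : ℕ | i ∈ I ∧ m * k < i} fun i => ((i : ℕ) : ℝ) ^ (-(2 * h))).symm
  have h1 := (htail k hk).1
  have h2 := (htail (m * k) (le_trans hk (Nat.le_mul_of_pos_left k (by omega)))).2
  rw [hsum] at h1
  have key : C⁻¹ * (k : ℝ) ^ (-h) ≤ C * ((m * k : ℕ) : ℝ) ^ (-h) := le_trans h1 h2
  have hk0 : (0:ℝ) < (k : ℝ) := by exact_mod_cast hk
  have hm0 : (0:ℝ) < (m : ℝ) := by exact_mod_cast hm1
  rw [Nat.cast_mul, Real.mul_rpow hm0.le hk0.le] at key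
  have hkh : (0:ℝ) < (k : ℝ) ^ (-h) := Real.rpow_pos_of_pos hk0 _
  have key2 : C⁻¹ ≤ C * (m : ℝ) ^ (-h) := by
    rw [← mul_assoc] at key
    exact le_of_mul_le_mul_right key hkh
  have hmh : (0:ℝ) < (m : ℝ) ^ h := Real.rpow_pos_of_pos hm0 _
  rw [Real.rpow_neg hm0.le] at key2
  rw [← div_eq_mul_inv, le_div_iff₀ hmh, inv_mul_le_iff₀ hC0] at key2
  rw [show (2:ℝ) = ((2:ℕ):ℝ) by norm_num, Real.rpow_natCast] at hmpow
  nlinarith [key2, hmpow]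
end
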